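/- arXiv:2301.03788 — 4 statements merged into one kernel-verified Lean document; each statement's English description precedes it below -/
import Mathlib

section
/- Let K > 0 and r be real numbers with 1 ≤ r < K, set t = 1 − r/K, and let i ≥ 1 be an integer. Then for every real x with x ≥ 1 such that x ≤ c_{i−1} or x ≥ c_i, it holds that t²/(x + 1 − 2r/K) ≥ λ_i·x + μ_i. -/
/-- Let `K > 0` and `r` be real numbers with `1 ≤ r < K`, set `t = 1 − r/K`, and let
`i ≥ 1` be an integer. With `c_j = 1 + t·(j−1)`, `λ_i = −1/(i(i+1))` and
`μ_i = ((2i−1)·t + 1)/(i(i+1))`, for every real `x ≥ 1` such that `x ≤ c_{i−1}` or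
`x ≥ c_i`, it holds that `t²/(x + 1 − 2r/K) ≥ λ_i·x + μ_i`. -/
theorem convex_above_chord_outside (K r : ℝ) (hK : 0 < K) (hr1 : 1 ≤ r) (hrK : r < K)
    (i : ℤ) (hi : 1 ≤ i) :
    let t : ℝ := 1 - r / K
    let c : ℤ → ℝ := fun j => 1 + t * ((j : ℝ) - 1)
    let lam : ℝ := -(1 / ((i : ℝ) * ((i : ℝ) + 1)))
    let mu : ℝ := ((2 * (i : ℝ) - 1) * t + 1) / ((i : ℝ) * ((i : ℝ) + 1))
    ∀ x : ℝ, 1 ≤ x → (x ≤ c (i - 1) ∨ c i ≤ x) →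
      t ^ 2 / (x + 1 - 2 * r / K) ≥ lam * x + mu := by
  intro t c lam mu x hx hcase
  have hrk : r / K < 1 := (div_lt_one hK).2 hrK
  have ht : 0 < t := by simp only [t]; linarith
  have hiR : (1:ℝ) ≤ (i:ℝ) := by exact_mod_cast hi
  have hii : (0:ℝ) < (i:ℝ) * ((i:ℝ) + 1) := by nlinarith
  have h2 : 2 * r / K = 2 * (r / K) := by ring
  have hd : 0 < x + 1 - 2 * r / K := by rw [h2]; simp only [t] at ht; linarith
  have hcc : c (i - 1) + t = c i := by
    simp only [c]; push_cast; ring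
  have hprod : 0 ≤ (x - c (i - 1)) * (x - c i) := by
    rcases hcase with h | h
    · have h2 : x ≤ c i := by linarith
      nlinarith
    · have h2 : c (i - 1) ≤ x := by linarith
      exact mul_nonneg (by linarith) (by linarith)
  have hid : t ^ 2 - (lam * x + mu) * (x + 1 - 2 * r / K)
      = (x - c (i - 1)) * (x - c i) / ((i:ℝ) * ((i:ℝ) + 1)) := by
    simp only [t, c, lam, mu]
    push_cast
    field_simp
    ring
  have hdiv : 0 ≤ (x - c (i - 1)) * (x - c i) / ((i:ℝ) * ((i:ℝ) + 1)) :=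
    div_nonneg hprod hii.le
  rw [ge_iff_le, le_div_iff₀ hd]
  linarith
end

section
/- Let K > 0 and r be real numbers with 0 ≤ r ≤ K, set t = 1 − r/K, and let i ≥ 1 and j ≥ 1 be integers. Then t/(j+1) ≥ λ_i·c_j + μ_i. In particular, if r < K, then t²/(c_j + 1 − 2r/K) ≥ λ_i·c_j + μ_i. -/
/-- Let `K > 0` and `r` be real numbers with `0 ≤ r ≤ K`, set `t = 1 − r/K`, and let
`i ≥ 1` and `j ≥ 1` be integers. With `c_j = 1 + t·(j−1)`, `λ_i = −1/(i(i+1))` and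
`μ_i = ((2i−1)·t + 1)/(i(i+1))`, we have `t/(j+1) ≥ λ_i·c_j + μ_i`; in particular, if
`r < K`, then `t²/(c_j + 1 − 2r/K) ≥ λ_i·c_j + μ_i`. -/
theorem chord_bound_at_cj (K r : ℝ) (hK : 0 < K) (hr0 : 0 ≤ r) (hrK : r ≤ K)
    (i j : ℤ) (hi : 1 ≤ i) (hj : 1 ≤ j) :
    let t : ℝ := 1 - r / K
    let c : ℤ → ℝ := fun j => 1 + t * ((j : ℝ) - 1)
    let lam : ℝ := -(1 / ((i : ℝ) * ((i : ℝ) + 1)))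
    let mu : ℝ := ((2 * (i : ℝ) - 1) * t + 1) / ((i : ℝ) * ((i : ℝ) + 1))
    t / ((j : ℝ) + 1) ≥ lam * c j + mu ∧
      (r < K → t ^ 2 / (c j + 1 - 2 * r / K) ≥ lam * c j + mu) := by
  intro t c lam mu
  have ht0 : 0 ≤ t := by
    have : r / K ≤ 1 := div_le_one_of_le₀ hrK hK.le
    simp only [t]; linarith
  have hi1 : (1 : ℝ) ≤ (i : ℝ) := by exact_mod_cast hi
  have hj1 : (1 : ℝ) ≤ (j : ℝ) := by exact_mod_cast hj
  have hjpos : (0 : ℝ) < (j : ℝ) + 1 := by linarith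
  have hipos : (0 : ℝ) < (i : ℝ) * ((i : ℝ) + 1) := by nlinarith
  have hint : (0 : ℝ) ≤ ((i : ℝ) - (j : ℝ)) * ((i : ℝ) - (j : ℝ) - 1) := by
    have h : (0 : ℤ) ≤ (i - j) * (i - j - 1) := by
      rcases le_or_gt (i - j) 0 with h | h
      · nlinarith
      · nlinarith
    have h2 : (0 : ℝ) ≤ (((i - j) * (i - j - 1) : ℤ) : ℝ) := by exact_mod_cast h
    push_cast at h2
    linarith
  have key : lam * c j + mu ≤ t / ((j : ℝ) + 1) := by
    rw [le_div_iff₀ hjpos]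
    simp only [lam, mu, c]
    have hne : (i : ℝ) * ((i : ℝ) + 1) ≠ 0 := hipos.ne'
    have heq : (-(1 / ((i : ℝ) * ((i : ℝ) + 1))) * (1 + t * ((j : ℝ) - 1)) +
        ((2 * (i : ℝ) - 1) * t + 1) / ((i : ℝ) * ((i : ℝ) + 1))) * ((j : ℝ) + 1) =
        (2 * (i : ℝ) - (j : ℝ)) * t * ((j : ℝ) + 1) / ((i : ℝ) * ((i : ℝ) + 1)) := by
      field_simp
      ring_nf
    rw [heq, div_le_iff₀ hipos]
    nlinarith [mul_nonneg ht0 hint]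
  refine ⟨key, fun hrlt => ?_⟩
  have htpos : 0 < t := by
    have : r / K < 1 := (div_lt_one hK).mpr hrlt
    simp only [t]; linarith
  have hd : c j + 1 - 2 * r / K = t * ((j : ℝ) + 1) := by
    simp only [c, t]; ring
  rw [hd, pow_two, mul_div_mul_left _ _ htpos.ne']
  exact key
end

section
/- Let K ≥ 2 and i ≥ 1 be integers, let N > 0 and r, c be real numbers with c ≥ 1 and r ≤ K, and let b_1, …, b_{K−1} be nonnegative real numbers satisfying ∑_{j=1}^{K−1} b_j ≥ N·(K − r) and ∑_{j=1}^{K−1} (j−1)·b_j ≤ (c − 1)·N·K. Then (1/(NK))·∑_{j=1}^{K−1} b_j/(j+1) ≥ −(2i−1)·r/(K·i·(i+1)) − c/(i(i+1)) + 2/(i+1). -/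
/-- Let `K ≥ 2` and `i ≥ 1` be integers, let `N > 0` and `r, c` be real numbers with
`c ≥ 1` and `r ≤ K`, and let `b_1, …, b_{K−1}` be nonnegative real numbers satisfying
`∑_{j=1}^{K−1} b_j ≥ N·(K − r)` and `∑_{j=1}^{K−1} (j−1)·b_j ≤ (c − 1)·N·K`. Then
`(1/(NK))·∑_{j=1}^{K−1} b_j/(j+1) ≥ −(2i−1)·r/(K·i·(i+1)) − c/(i(i+1)) + 2/(i+1)`. -/
theorem download_converse_key_step (K i : ℕ) (hK : 2 ≤ K) (hi : 1 ≤ i)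
    (N r c : ℝ) (hN : 0 < N) (hc : 1 ≤ c) (hr : r ≤ K)
    (b : ℕ → ℝ) (hb : ∀ j ∈ Finset.Icc 1 (K - 1), 0 ≤ b j)
    (hsum : (∑ j ∈ Finset.Icc 1 (K - 1), b j) ≥ N * ((K : ℝ) - r))
    (hwsum : (∑ j ∈ Finset.Icc 1 (K - 1), ((j : ℝ) - 1) * b j) ≤ (c - 1) * N * K) :
    (1 / (N * (K : ℝ))) * ∑ j ∈ Finset.Icc 1 (K - 1), b j / ((j : ℝ) + 1)
      ≥ -(2 * (i : ℝ) - 1) * r / ((K : ℝ) * i * ((i : ℝ) + 1))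
        - c / ((i : ℝ) * ((i : ℝ) + 1)) + 2 / ((i : ℝ) + 1) := by
  have hi1 : (1 : ℝ) ≤ (i : ℝ) := by exact_mod_cast hi
  have hipos : (0 : ℝ) < (i : ℝ) := by linarith
  have hii : (0 : ℝ) < (i : ℝ) * ((i : ℝ) + 1) := by nlinarith
  have hK1 : (2 : ℝ) ≤ (K : ℝ) := by exact_mod_cast hK
  have hKpos : (0 : ℝ) < (K : ℝ) := by linarith
  -- pointwise bound
  have key : ∀ j ∈ Finset.Icc 1 (K - 1),
      b j * (2 * (i : ℝ) - (j : ℝ)) / ((i : ℝ) * ((i : ℝ) + 1)) ≤ b j / ((j : ℝ) + 1) := by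
    intro j hj
    have hbj := hb j hj
    have hjpos : (0 : ℝ) < (j : ℝ) + 1 := by positivity
    rw [div_le_div_iff₀ hii hjpos]
    have hfac : (0 : ℝ) ≤ ((i : ℝ) - (j : ℝ)) * ((i : ℝ) - (j : ℝ) - 1) := by
      rcases lt_or_ge i j with h | h
      · have : (i : ℝ) + 1 ≤ (j : ℝ) := by exact_mod_cast h
        nlinarith
      · rcases eq_or_lt_of_le h with h' | h'
        · subst h'; nlinarith
        · have : (j : ℝ) + 1 ≤ (i : ℝ) := by exact_mod_cast h'
          nlinarith
    nlinarith [mul_nonneg hbj hfac]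
  have hsum2 : (∑ j ∈ Finset.Icc 1 (K - 1), b j * (2 * (i : ℝ) - (j : ℝ)) / ((i : ℝ) * ((i : ℝ) + 1)))
      ≤ ∑ j ∈ Finset.Icc 1 (K - 1), b j / ((j : ℝ) + 1) := Finset.sum_le_sum key
  have hexp : (∑ j ∈ Finset.Icc 1 (K - 1), b j * (2 * (i : ℝ) - (j : ℝ)) / ((i : ℝ) * ((i : ℝ) + 1)))
      = ((2 * (i : ℝ) - 1) * (∑ j ∈ Finset.Icc 1 (K - 1), b j)
          - (∑ j ∈ Finset.Icc 1 (K - 1), ((j : ℝ) - 1) * b j)) / ((i : ℝ) * ((i : ℝ) + 1)) := by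
    rw [Finset.mul_sum, ← Finset.sum_sub_distrib, ← Finset.sum_div]
    congr 1
    apply Finset.sum_congr rfl
    intro j _
    ring
  have hT : (2 * (i : ℝ) - 1) * (N * ((K : ℝ) - r)) - (c - 1) * N * (K : ℝ)
      ≤ (2 * (i : ℝ) - 1) * (∑ j ∈ Finset.Icc 1 (K - 1), b j)
          - (∑ j ∈ Finset.Icc 1 (K - 1), ((j : ℝ) - 1) * b j) := by
    have h1 : (0 : ℝ) ≤ 2 * (i : ℝ) - 1 := by linarith
    nlinarith [mul_le_mul_of_nonneg_left hsum h1]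
  have hL : ((2 * (i : ℝ) - 1) * (N * ((K : ℝ) - r)) - (c - 1) * N * (K : ℝ)) / ((i : ℝ) * ((i : ℝ) + 1))
      ≤ ∑ j ∈ Finset.Icc 1 (K - 1), b j / ((j : ℝ) + 1) := by
    calc ((2 * (i : ℝ) - 1) * (N * ((K : ℝ) - r)) - (c - 1) * N * (K : ℝ)) / ((i : ℝ) * ((i : ℝ) + 1))
        ≤ ((2 * (i : ℝ) - 1) * (∑ j ∈ Finset.Icc 1 (K - 1), b j)
            - (∑ j ∈ Finset.Icc 1 (K - 1), ((j : ℝ) - 1) * b j)) / ((i : ℝ) * ((i : ℝ) + 1)) := by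
          gcongr
      _ = _ := hexp.symm
      _ ≤ _ := hsum2
  have hNK : (0 : ℝ) < 1 / (N * (K : ℝ)) := by positivity
  have heq : -(2 * (i : ℝ) - 1) * r / ((K : ℝ) * i * ((i : ℝ) + 1))
        - c / ((i : ℝ) * ((i : ℝ) + 1)) + 2 / ((i : ℝ) + 1)
      = (1 / (N * (K : ℝ))) *
        (((2 * (i : ℝ) - 1) * (N * ((K : ℝ) - r)) - (c - 1) * N * (K : ℝ)) / ((i : ℝ) * ((i : ℝ) + 1))) := by
    field_simp
    ring
  rw [heq]
  exact mul_le_mul_of_nonneg_left hL hNK.le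
end

section
/- In the combinatorial model of a map-phase allocation for K nodes and N files, for every integer i ≥ 1 it holds that (1/(NK))·∑_{j=1}^{K−1} b_j/(j+1) ≥ −(2i−1)·r/(K·i·(i+1)) − c/(i(i+1)) + 2/(i+1), where r is the storage load and c is the computation load. -/
open Finset

/-- In the combinatorial model of a map-phase allocation for `K` nodes and `N` files
(node `q` stores the files `M q`; `Z k n` is the nonempty set of nodes computing the
intermediate value `v_{k,n}`, each of which must store file `n`), with storage load
`r = (∑_q |M_q|)/N`, computation load `c = (∑_k ∑_n |Z k n|)/(N·K)`, and
`b j` the number of pairs `(k,n)` with `k ∉ Z k n` and `|Z k n| = j`, for every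
integer `i ≥ 1` it holds that
`(1/(NK))·∑_{j=1}^{K−1} b_j/(j+1) ≥ −(2i−1)·r/(K·i·(i+1)) − c/(i(i+1)) + 2/(i+1)`. -/
theorem download_converse_combinatorial (K N : ℕ) (hK : 2 ≤ K) (hN : 1 ≤ N)
    (M : Fin K → Finset (Fin N)) (Z : Fin K → Fin N → Finset (Fin K))
    (hstore : ∀ k n q, q ∈ Z k n → n ∈ M q)
    (hne : ∀ k n, (Z k n).Nonempty)
    (i : ℕ) (hi : 1 ≤ i) :
    let r : ℚ := (∑ q, ((M q).card : ℚ)) / N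
    let c : ℚ := (∑ k, ∑ n, ((Z k n).card : ℚ)) / ((N : ℚ) * K)
    let b : ℕ → ℚ := fun j =>
      ((Finset.univ.filter
        (fun p : Fin K × Fin N => p.1 ∉ Z p.1 p.2 ∧ (Z p.1 p.2).card = j)).card : ℚ)
    (1 / ((N : ℚ) * K)) * ∑ j ∈ Finset.Icc 1 (K - 1), b j / ((j : ℚ) + 1)
      ≥ -(2 * (i : ℚ) - 1) * r / ((K : ℚ) * i * ((i : ℚ) + 1))
        - c / ((i : ℚ) * ((i : ℚ) + 1)) + 2 / ((i : ℚ) + 1) := by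
  intro r c b
  have hN0 : (0:ℚ) < N := by exact_mod_cast Nat.lt_of_lt_of_le Nat.zero_lt_one hN
  have hK0 : (0:ℚ) < K := by
    have : (0:ℕ) < K := by omega
    exact_mod_cast this
  have hi0 : (0:ℚ) < i := by exact_mod_cast hi
  have hi1 : (1:ℚ) ≤ i := by exact_mod_cast hi
  -- Step 1: rewrite the sum over j as a sum over pairs, then as ∑ n, ∑ k ∉ Z k n.
  set P : Finset (Fin K × Fin N) :=
    Finset.univ.filter (fun p : Fin K × Fin N => p.1 ∉ Z p.1 p.2) with hP
  have hmaps : ∀ p ∈ P, (Z p.1 p.2).card ∈ Finset.Icc 1 (K - 1) := by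
    intro p hp
    rw [hP, mem_filter] at hp
    refine mem_Icc.2 ⟨(hne p.1 p.2).card_pos, ?_⟩
    have hsub : Z p.1 p.2 ⊆ Finset.univ.erase p.1 := by
      intro q hq
      exact mem_erase.2 ⟨fun h => hp.2 (h ▸ hq), mem_univ q⟩
    calc (Z p.1 p.2).card ≤ (Finset.univ.erase p.1).card := card_le_card hsub
      _ = K - 1 := by rw [card_erase_of_mem (mem_univ _), card_univ, Fintype.card_fin]
  have hSeq : ∑ j ∈ Finset.Icc 1 (K - 1), b j / ((j : ℚ) + 1)
      = ∑ p ∈ P, 1 / (((Z p.1 p.2).card : ℚ) + 1) := by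
    rw [← Finset.sum_fiberwise_of_maps_to hmaps (fun p => 1 / (((Z p.1 p.2).card : ℚ) + 1))]
    refine Finset.sum_congr rfl (fun j hj => ?_)
    have hset : P.filter (fun p => (Z p.1 p.2).card = j)
        = Finset.univ.filter
          (fun p : Fin K × Fin N => p.1 ∉ Z p.1 p.2 ∧ (Z p.1 p.2).card = j) := by
      rw [hP, Finset.filter_filter]
    have h1 : ∑ p ∈ P.filter (fun p => (Z p.1 p.2).card = j),
        1 / (((Z p.1 p.2).card : ℚ) + 1)
        = ∑ _p ∈ P.filter (fun p => (Z p.1 p.2).card = j), 1 / ((j : ℚ) + 1) :=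
      Finset.sum_congr rfl (fun p hp => by rw [(Finset.mem_filter.1 hp).2])
    rw [h1, Finset.sum_const, hset, nsmul_eq_mul]
    simp [b, div_eq_mul_inv]
  have hSeq2 : ∑ p ∈ P, 1 / (((Z p.1 p.2).card : ℚ) + 1)
      = ∑ n : Fin N, ∑ k ∈ Finset.univ.filter (fun k : Fin K => k ∉ Z k n),
          1 / (((Z k n).card : ℚ) + 1) := by
    rw [hP, Finset.sum_filter, Fintype.sum_prod_type, Finset.sum_comm]
    refine Finset.sum_congr rfl (fun n _ => ?_)
    rw [Finset.sum_filter]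
  -- Step 2: double counting for storage
  have hT : ∑ q, ((M q).card : ℚ)
      = ∑ n : Fin N, ((Finset.univ.filter (fun q : Fin K => n ∈ M q)).card : ℚ) := by
    have : ∑ q, (M q).card
        = ∑ n : Fin N, (Finset.univ.filter (fun q : Fin K => n ∈ M q)).card := by
      simp only [Finset.card_filter]
      rw [Finset.sum_comm]
      refine Finset.sum_congr rfl (fun q _ => ?_)
      rw [← Finset.card_filter]
      congr 1
      exact (Finset.filter_univ_mem (M q)).symm
    exact_mod_cast congrArg (Nat.cast : ℕ → ℚ) this
  -- Step 3: per-file inequality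
  have key : ∀ n : Fin N,
      2 * (i:ℚ) * K ≤ (i:ℚ) * ((i:ℚ) + 1) *
          (∑ k ∈ Finset.univ.filter (fun k : Fin K => k ∉ Z k n),
            1 / (((Z k n).card : ℚ) + 1))
        + (∑ k : Fin K, ((Z k n).card : ℚ))
        + (2 * (i:ℚ) - 1) * ((Finset.univ.filter (fun q : Fin K => n ∈ M q)).card : ℚ) := by
    intro n
    set E : Finset (Fin K) := Finset.univ.filter (fun k : Fin K => k ∈ Z k n) with hEdef
    set F : Finset (Fin K) := Finset.univ.filter (fun k : Fin K => k ∉ Z k n) with hFdef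
    have hcard : E.card + F.card = K := by
      rw [hEdef, hFdef, Finset.card_filter_add_card_filter_not, card_univ,
        Fintype.card_fin]
    have hcardQ : (F.card : ℚ) = (K : ℚ) - E.card := by
      have := hcard
      push_cast [← this]
      ring
    have hEd : (E.card : ℚ) ≤ ((Finset.univ.filter (fun q : Fin K => n ∈ M q)).card : ℚ) := by
      have : E ⊆ Finset.univ.filter (fun q : Fin K => n ∈ M q) := by
        intro k hk
        rw [hEdef, mem_filter] at hk
        exact mem_filter.2 ⟨mem_univ k, hstore k n k hk.2⟩
      exact_mod_cast card_le_card this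
    have h1 : ∑ k ∈ F, (2 * (i:ℚ) - ((Z k n).card : ℚ))
        ≤ ∑ k ∈ F, (i:ℚ) * ((i:ℚ) + 1) * (1 / (((Z k n).card : ℚ) + 1)) := by
      refine Finset.sum_le_sum (fun k _ => ?_)
      have hc : (0:ℚ) < ((Z k n).card : ℚ) + 1 := by positivity
      rw [mul_one_div, le_div_iff₀ hc]
      rcases le_or_gt i ((Z k n).card) with h | h
      · have h' : (i:ℚ) ≤ ((Z k n).card : ℚ) := by exact_mod_cast h
        nlinarith
      · have h' : ((Z k n).card : ℚ) + 1 ≤ (i:ℚ) := by exact_mod_cast h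
        nlinarith
    have h1' : (i:ℚ) * ((i:ℚ) + 1) *
        (∑ k ∈ F, 1 / (((Z k n).card : ℚ) + 1))
        ≥ 2 * (i:ℚ) * F.card - ∑ k ∈ F, ((Z k n).card : ℚ) := by
      have hL : ∑ k ∈ F, (2 * (i:ℚ) - ((Z k n).card : ℚ))
          = 2 * (i:ℚ) * F.card - ∑ k ∈ F, ((Z k n).card : ℚ) := by
        rw [Finset.sum_sub_distrib, Finset.sum_const, nsmul_eq_mul]
        ring
      rw [ge_iff_le, ← hL, Finset.mul_sum]
      exact h1
    have hsplit : (∑ k : Fin K, ((Z k n).card : ℚ))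
        = ∑ k ∈ E, ((Z k n).card : ℚ) + ∑ k ∈ F, ((Z k n).card : ℚ) := by
      rw [hEdef, hFdef]
      exact (Finset.sum_filter_add_sum_filter_not _ _ _).symm
    have hE1 : (E.card : ℚ) ≤ ∑ k ∈ E, ((Z k n).card : ℚ) := by
      have : ∀ k ∈ E, (1:ℚ) ≤ ((Z k n).card : ℚ) := by
        intro k _
        exact_mod_cast (hne k n).card_pos
      calc (E.card : ℚ) = ∑ _k ∈ E, (1:ℚ) := by rw [Finset.sum_const, nsmul_eq_mul, mul_one]
        _ ≤ _ := Finset.sum_le_sum this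
    have hfac : (0:ℚ) ≤ 2 * (i:ℚ) - 1 := by linarith
    have hmul := mul_le_mul_of_nonneg_left hEd hfac
    have hFe : 2 * (i:ℚ) * (F.card : ℚ) = 2 * (i:ℚ) * K - 2 * (i:ℚ) * (E.card : ℚ) := by
      rw [hcardQ]; ring
    linarith [h1', hsplit, hE1, hmul, hFe]
  -- Step 4: sum over n
  have hstar : 2 * (i:ℚ) * N * K ≤ (i:ℚ) * ((i:ℚ) + 1) *
        (∑ j ∈ Finset.Icc 1 (K - 1), b j / ((j : ℚ) + 1))
      + (2 * (i:ℚ) - 1) * (∑ q, ((M q).card : ℚ))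
      + (∑ k, ∑ n, ((Z k n).card : ℚ)) := by
    have hU : (∑ k, ∑ n, ((Z k n).card : ℚ))
        = ∑ n : Fin N, ∑ k : Fin K, ((Z k n).card : ℚ) := Finset.sum_comm
    rw [hSeq, hSeq2, hT, hU, Finset.mul_sum, Finset.mul_sum,
      ← Finset.sum_add_distrib, ← Finset.sum_add_distrib]
    calc 2 * (i:ℚ) * N * K = ∑ _n : Fin N, 2 * (i:ℚ) * K := by
          rw [Finset.sum_const, card_univ, Fintype.card_fin, nsmul_eq_mul]
          ring
      _ ≤ _ := by
          refine Finset.sum_le_sum (fun n _ => ?_)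
          have := key n
          linarith
  -- Step 5: clear denominators
  rw [ge_iff_le, ← sub_nonneg]
  have hexp : (1 / ((N : ℚ) * K)) * (∑ j ∈ Finset.Icc 1 (K - 1), b j / ((j : ℚ) + 1))
      - (-(2 * (i : ℚ) - 1) * r / ((K : ℚ) * i * ((i : ℚ) + 1))
        - c / ((i : ℚ) * ((i : ℚ) + 1)) + 2 / ((i : ℚ) + 1))
      = ((i:ℚ) * ((i:ℚ) + 1) * (∑ j ∈ Finset.Icc 1 (K - 1), b j / ((j : ℚ) + 1))
          + (2 * (i:ℚ) - 1) * (∑ q, ((M q).card : ℚ))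
          + (∑ k, ∑ n, ((Z k n).card : ℚ)) - 2 * (i:ℚ) * N * K)
        / ((N : ℚ) * K * ((i:ℚ) * ((i:ℚ) + 1))) := by
    simp only [r, c]
    field_simp
    ring
  rw [hexp]
  exact div_nonneg (by linarith) (by positivity)
end
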